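/- arXiv:1509.07045 — 4 statements merged into one kernel-verified Lean document; each statement's English description precedes it below -/
import Mathlib

section
/- Let F denote the set of finitely supported sequences of nonnegative integers indexed by ℕ, and let ρ = (ρ_j)_{j≥1} be a sequence of reals with ρ_j > 1 for all j and (ρ_j^{-1})_{j≥1} ∈ ℓ^q for some 0 < q < ∞. Then the family (ρ^{-qν})_{ν∈F}, where ρ^{ν} := ∏_{j≥1} ρ_j^{ν_j}, is summable, and its sum equals ∏_{j≥1} (1 - ρ_j^{-q})^{-1}. -/
/-!
With `a j = ρ j ^ (-q) ∈ [0, 1)`, the summand is the monomial `a ^ ν`. Over the multi-indices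
supported in a finite set `s` the sum factors into geometric series and equals
`∏ j ∈ s, (1 - a j)⁻¹`. These partial products increase to the infinite product, which converges
since `∑ a j < ∞`; every finite partial sum of the series lies below one of them, and each of them
lies below the full sum, so the series converges to the product.
-/

open Finset

abbrev multiPow {ι M : Type*} [CommMonoid M] (a : ι → M) (ν : ι →₀ ℕ) : M :=
  ν.prod fun j n => a j ^ n

section MultiPow

variable {ι : Type*}

theorem multiPow_add_single {M : Type*} [CommMonoid M] (a : ι → M) (μ : ι →₀ ℕ) (k : ι)
    (m : ℕ) : multiPow a (μ + .single k m) = multiPow a μ * a k ^ m := by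
  rw [multiPow, Finsupp.prod_add_index' (fun _ => pow_zero _) (fun _ _ _ => pow_add _ _ _)]
  exact congrArg _ (Finsupp.prod_single_index (pow_zero _))

theorem multiPow_nonneg {a : ι → ℝ} (h0 : ∀ j, 0 ≤ a j) (ν : ι →₀ ℕ) : 0 ≤ multiPow a ν :=
  Finset.prod_nonneg fun j _ => pow_nonneg (h0 j) _

theorem multiPow_rpow {ρ : ι → ℝ} (hρ : ∀ j, 0 ≤ ρ j) (ν : ι →₀ ℕ) (r : ℝ) :
    multiPow ρ ν ^ r = multiPow (fun j => ρ j ^ r) ν := by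
  rw [multiPow, multiPow, Finsupp.prod, Finsupp.prod,
    ← Real.finsetProd_rpow _ _ fun j _ => pow_nonneg (hρ j) _]
  exact Finset.prod_congr rfl fun j _ => (Real.rpow_pow_comm (hρ j) r _).symm

end MultiPow

theorem Finsupp.injective_add_single_of_support_subset {ι M : Type*} [AddCancelCommMonoid M]
    {k : ι} {s : Finset ι} (hk : k ∉ s) :
    Function.Injective fun p : {μ : ι →₀ M | μ.support ⊆ s} × M => p.1.1 + single k p.2 := by
  rintro p p' hpp'
  have hk0 : ∀ μ : {μ : ι →₀ M | μ.support ⊆ s}, μ.1 k = 0 := fun μ =>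
    notMem_support_iff.mp fun h => hk (μ.2 h)
  have hm : p.2 = p'.2 := by simpa [hk0] using DFunLike.congr_fun hpp' k
  simp only [hm, add_left_inj] at hpp'
  exact Prod.ext (Subtype.ext hpp') hm

section MultiGeometric

variable {ι : Type*} {a : ι → ℝ}

theorem hasSum_multiPow_indicator_support_subset [DecidableEq ι] (h0 : ∀ j, 0 ≤ a j)
    (h1 : ∀ j, a j < 1) (s : Finset ι) :
    HasSum ({ν : ι →₀ ℕ | ν.support ⊆ s}.indicator (multiPow a)) (∏ j ∈ s, (1 - a j)⁻¹) := by
  induction s using Finset.induction with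
  | empty =>
    convert hasSum_ite_eq (0 : ι →₀ ℕ) (1 : ℝ) using 1
    · ext ν
      by_cases hν : ν = 0 <;> simp [Set.indicator, hν]
    · simp
  | @insert k s hk ih =>
    rw [← hasSum_subtype_iff_indicator] at ih
    -- each `ν` supported in `insert k s` is uniquely `μ + single k m` with `μ` supported in `s`
    let g : {μ : ι →₀ ℕ | μ.support ⊆ s} × ℕ → ι →₀ ℕ := fun p => p.1.1 + .single k p.2
    have hg : Function.Injective g := Finsupp.injective_add_single_of_support_subset hk
    have hrange : ∀ ν ∉ Set.range g,
        {ν : ι →₀ ℕ | ν.support ⊆ insert k s}.indicator (multiPow a) ν = 0 := by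
      intro ν hν
      refine Set.indicator_of_notMem (fun hsupp => hν ⟨(⟨ν.erase k, ?_⟩, ν k), ?_⟩) _
      · show (ν.erase k).support ⊆ s
        rw [Finsupp.support_erase]
        exact Finset.subset_insert_iff.mp hsupp
      · exact Finsupp.erase_add_single k ν
    have hg_eval : ∀ p, {ν : ι →₀ ℕ | ν.support ⊆ insert k s}.indicator (multiPow a) (g p)
        = multiPow a p.1.1 * a k ^ p.2 := by
      intro p
      have hsupp : (g p).support ⊆ insert k s :=
        Finsupp.support_add.trans <| Finset.union_subset (p.1.2.trans (subset_insert _ _)) <|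
          Finsupp.support_single_subset.trans (singleton_subset_iff.mpr (mem_insert_self _ _))
      rw [Set.indicator_of_mem (show g p ∈ _ from hsupp), multiPow_add_single]
    have hgeom := hasSum_geometric_of_lt_one (h0 k) (h1 k)
    rw [← hg.hasSum_iff hrange, Finset.prod_insert hk, mul_comm, Function.comp_def]
    simp only [hg_eval]
    exact ih.mul hgeom (ih.summable.mul_of_nonneg hgeom.summable
      (fun μ => multiPow_nonneg h0 μ.1) fun n => pow_nonneg (h0 k) n)

theorem sum_multiPow_le_prod_inv_one_sub [DecidableEq ι] (h0 : ∀ j, 0 ≤ a j)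
    (h1 : ∀ j, a j < 1) (u : Finset (ι →₀ ℕ)) :
    ∑ ν ∈ u, multiPow a ν ≤ ∏ j ∈ u.sup Finsupp.support, (1 - a j)⁻¹ := by
  have hu : ∀ ν ∈ u, ν ∈ {ν : ι →₀ ℕ | ν.support ⊆ u.sup Finsupp.support} := fun ν hν =>
    Finset.le_sup (f := Finsupp.support) hν
  calc ∑ ν ∈ u, multiPow a ν
      = ∑ ν ∈ u, {ν : ι →₀ ℕ | ν.support ⊆ u.sup Finsupp.support}.indicator (multiPow a) ν :=
        Finset.sum_congr rfl fun ν hν => (Set.indicator_of_mem (hu ν hν) _).symm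
    _ ≤ _ := sum_le_hasSum u (fun ν _ => Set.indicator_nonneg (fun ν _ => multiPow_nonneg h0 ν) ν)
        (hasSum_multiPow_indicator_support_subset h0 h1 _)

theorem multipliable_inv_one_sub (h1 : ∀ j, a j < 1) (ha : Summable a) :
    Multipliable fun j => (1 - a j)⁻¹ := by
  refine Real.multipliable_of_summable_log (fun j => inv_pos.mpr (sub_pos.mpr (h1 j))) ?_
  simpa [Real.log_inv, sub_eq_add_neg] using (Real.summable_log_one_add_of_summable ha.neg).neg

theorem prod_inv_one_sub_le_tprod (h0 : ∀ j, 0 ≤ a j) (h1 : ∀ j, a j < 1) (ha : Summable a)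
    (s : Finset ι) : ∏ j ∈ s, (1 - a j)⁻¹ ≤ ∏' j, (1 - a j)⁻¹ := by
  have hle : ∀ j, 1 ≤ (1 - a j)⁻¹ := fun j =>
    (one_le_inv₀ (sub_pos.mpr (h1 j))).mpr (by linarith [h0 j])
  refine Monotone.ge_of_tendsto (fun s t hst => ?_) (multipliable_inv_one_sub h1 ha).hasProd s
  exact Finset.prod_le_prod_of_subset_of_one_le hst (fun j _ => zero_le_one.trans (hle j))
    fun j _ _ => hle j

theorem hasSum_multiPow_tprod_inv_one_sub (h0 : ∀ j, 0 ≤ a j) (h1 : ∀ j, a j < 1)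
    (ha : Summable a) : HasSum (multiPow a) (∏' j, (1 - a j)⁻¹) := by
  classical
  have hbound : ∀ u : Finset (ι →₀ ℕ), ∑ ν ∈ u, multiPow a ν ≤ ∏' j, (1 - a j)⁻¹ := fun u =>
    (sum_multiPow_le_prod_inv_one_sub h0 h1 u).trans (prod_inv_one_sub_le_tprod h0 h1 ha _)
  have hsum : Summable (multiPow a) := summable_of_sum_le (multiPow_nonneg h0) hbound
  convert hsum.hasSum using 1
  refine le_antisymm ?_ (hsum.tsum_le_of_sum_le hbound)
  refine le_of_tendsto' (multipliable_inv_one_sub h1 ha).hasProd fun s => ?_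
  exact hasSum_le (Set.indicator_le_self' fun ν _ => multiPow_nonneg h0 ν)
    (hasSum_multiPow_indicator_support_subset h0 h1 s) hsum.hasSum

end MultiGeometric

theorem stmt_2 (ρ : ℕ → ℝ) (q : ℝ) (hq : 0 < q) (hρ : ∀ j, 1 < ρ j)
    (hsum : Summable fun j => (ρ j) ^ (-q)) :
    Summable (fun ν : ℕ →₀ ℕ => (ν.prod fun j n => ρ j ^ n) ^ (-q)) ∧
      ∑' ν : ℕ →₀ ℕ, (ν.prod fun j n => ρ j ^ n) ^ (-q) =
        ∏' j : ℕ, (1 - (ρ j) ^ (-q))⁻¹ := by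
  have hρ0 : ∀ j, 0 ≤ ρ j := fun j => (zero_lt_one.trans (hρ j)).le
  have h := hasSum_multiPow_tprod_inv_one_sub (fun j => Real.rpow_nonneg (hρ0 j) (-q))
    (fun j => Real.rpow_lt_one_of_one_lt_of_neg (hρ j) (neg_neg_of_pos hq)) hsum
  rw [← funext fun ν => multiPow_rpow hρ0 ν (-q)] at h
  exact ⟨h.summable, h.tsum_eq⟩
end

section
/- Let F be the set of finitely supported multi-indices over ℕ and let (t_ν)_{ν∈F} be nonnegative reals. Suppose ρ = (ρ_j)_{j≥1} satisfies ρ_j > 1 and (ρ_j^{-1}) ∈ ℓ^q(ℕ) with q = 2p/(2-p) for some 0 < p < 2, and suppose ∑_{ν∈F} ρ^{2ν} t_ν^2 < ∞. Then ∑_{ν∈F} t_ν^p < ∞. -/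
/-!
Write `t ν ^ p = (ρ^ν t ν) ^ p * (ρ^ν) ^ (-p)` and apply Hölder's inequality with the conjugate
exponents `2 / p` and `2 / (2 - p)`: the first factor is controlled by `∑ ρ^{2ν} t ν ^ 2`, the
second by `∑ ρ^{-qν}`. The latter is the multiplicative sum `∏ j, (1 - ρ_j^{-q})⁻¹`, which is
finite because `∑ j, ρ_j^{-q}` is.
-/

open Finset Filter

theorem Finset.sum_finsupp_prod_eq_prod_sum {ι M R : Type*} [Zero M] [CommSemiring R]
    (s : Finset ι) (t : ι → Finset M) (g : ι → M → R) :
    ∑ ν ∈ s.finsupp t, ∏ i ∈ s, g i (ν i) = ∏ i ∈ s, ∑ m ∈ t i, g i m := by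
  classical
  rw [Finset.finsupp, sum_map, prod_sum]
  refine sum_congr rfl fun x _ => ?_
  rw [← prod_attach s]
  exact prod_congr rfl fun i _ => by simp [Finsupp.indicator_of_mem i.2]

theorem Summable.div_one_sub {ι : Type*} {r : ι → ℝ} (hr : Summable r) (h0 : ∀ i, 0 ≤ r i) :
    Summable fun i => r i / (1 - r i) := by
  refine Summable.of_norm_bounded_eventually (hr.mul_left 2) ?_
  filter_upwards [hr.tendsto_cofinite_zero.eventually (eventually_le_nhds one_half_pos)] with i hi
  rw [Real.norm_of_nonneg (div_nonneg (h0 i) (by linarith)), div_le_iff₀ (by linarith)]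
  nlinarith [h0 i]

theorem summable_finsupp_prod_pow {ι : Type*} {r : ι → ℝ} (h0 : ∀ i, 0 ≤ r i) (h1 : ∀ i, r i < 1)
    (hr : Summable r) : Summable fun ν : ι →₀ ℕ => ν.prod fun i n => r i ^ n := by
  classical
  -- Partial sums are bounded by `∏ i, (1 - r i)⁻¹ = ∏ i, (1 + r i / (1 - r i)) ≤ exp (∑ ...)`.
  refine summable_of_sum_le (c := Real.exp (∑' i, r i / (1 - r i)))
    (fun ν => prod_nonneg fun i _ => pow_nonneg (h0 i) _) fun S => ?_
  set s := S.biUnion Finsupp.support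
  have hS : S ⊆ s.finsupp fun i => S.image (· i) := fun ν hν =>
    mem_finsupp_iff.2 ⟨subset_biUnion_of_mem _ hν, fun _ _ => mem_image_of_mem _ hν⟩
  have hgeom (i : ι) (T : Finset ℕ) : ∑ n ∈ T, r i ^ n ≤ 1 + r i / (1 - r i) := by
    have : 0 < 1 - r i := by linarith [h1 i]
    calc ∑ n ∈ T, r i ^ n ≤ ∑' n, r i ^ n :=
          (summable_geometric_of_lt_one (h0 i) (h1 i)).sum_le_tsum T fun n _ => pow_nonneg (h0 i) n
      _ = 1 + r i / (1 - r i) := by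
          rw [tsum_geometric_of_lt_one (h0 i) (h1 i)]; field_simp; ring
  calc ∑ ν ∈ S, ν.prod (fun i n => r i ^ n)
      = ∑ ν ∈ S, ∏ i ∈ s, r i ^ ν i :=
        sum_congr rfl fun ν hν => Finsupp.prod_of_support_subset ν (subset_biUnion_of_mem _ hν) _
          fun _ _ => pow_zero _
    _ ≤ ∑ ν ∈ s.finsupp fun i => S.image (· i), ∏ i ∈ s, r i ^ ν i :=
        sum_le_sum_of_subset_of_nonneg hS fun ν _ _ => prod_nonneg fun i _ => pow_nonneg (h0 i) _
    _ = ∏ i ∈ s, ∑ n ∈ S.image (· i), r i ^ n := sum_finsupp_prod_eq_prod_sum _ _ _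
    _ ≤ ∏ i ∈ s, (1 + r i / (1 - r i)) :=
        prod_le_prod (fun i _ => sum_nonneg fun n _ => pow_nonneg (h0 i) n) fun i _ => hgeom i _
    _ ≤ Real.exp (∑ i ∈ s, r i / (1 - r i)) :=
        Real.prod_one_add_le_exp_sum s fun i => div_nonneg (h0 i) (by linarith [h1 i])
    _ ≤ Real.exp (∑' i, r i / (1 - r i)) :=
        Real.exp_le_exp.2 <| (hr.div_one_sub h0).sum_le_tsum s
          fun i _ => div_nonneg (h0 i) (by linarith [h1 i])

theorem Finsupp.prod_pow_rpow {ι : Type*} {ρ : ι → ℝ} (hρ : ∀ i, 0 ≤ ρ i) (ν : ι →₀ ℕ) (x : ℝ) :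
    (ν.prod fun i n => ρ i ^ n) ^ x = ν.prod fun i n => (ρ i ^ x) ^ n := by
  rw [Finsupp.prod, Finsupp.prod, ← Real.finsetProd_rpow _ _ fun i _ => pow_nonneg (hρ i) _]
  refine Finset.prod_congr rfl fun i _ => ?_
  rw [← Real.rpow_natCast, ← Real.rpow_natCast, ← Real.rpow_mul (hρ i), ← Real.rpow_mul (hρ i),
    mul_comm]

theorem summable_rpow_of_summable_sq_mul_sq {ι : Type*} {t w : ι → ℝ} {p : ℝ} (hp0 : 0 < p)
    (hp2 : p < 2) (ht : ∀ i, 0 ≤ t i) (hw : ∀ i, 0 < w i)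
    (hwt : Summable fun i => w i ^ 2 * t i ^ 2)
    (hw' : Summable fun i => w i ^ (-(2 * p / (2 - p)))) :
    Summable fun i => t i ^ p := by
  have hconj : (2 / p).HolderConjugate (2 / (2 - p)) := by
    rw [Real.holderConjugate_iff, inv_div, inv_div]
    exact ⟨(one_lt_div hp0).2 hp2, by ring⟩
  have hf (i : ι) : ((w i * t i) ^ p) ^ (2 / p) = w i ^ 2 * t i ^ 2 := by
    rw [← Real.rpow_mul (mul_nonneg (hw i).le (ht i)), mul_div_cancel₀ _ hp0.ne', Real.rpow_two,
      mul_pow]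
  have hg (i : ι) : (w i ^ (-p)) ^ (2 / (2 - p)) = w i ^ (-(2 * p / (2 - p))) := by
    rw [← Real.rpow_mul (hw i).le]; ring_nf
  have hfg (i : ι) : (w i * t i) ^ p * w i ^ (-p) = t i ^ p := by
    rw [Real.mul_rpow (hw i).le (ht i), mul_right_comm, ← Real.rpow_add (hw i), add_neg_cancel,
      Real.rpow_zero, one_mul]
  have hsum := Real.summable_mul_of_Lp_Lq_of_nonneg hconj
    (fun i => Real.rpow_nonneg (mul_nonneg (hw i).le (ht i)) p)
    (fun i => Real.rpow_nonneg (hw i).le (-p)) (hwt.congr fun i => (hf i).symm)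
    (hw'.congr fun i => (hg i).symm)
  exact hsum.congr hfg

theorem stmt_3 (t : (ℕ →₀ ℕ) → ℝ) (ρ : ℕ → ℝ) (p : ℝ) (hp0 : 0 < p) (hp2 : p < 2)
    (ht : ∀ ν, 0 ≤ t ν) (hρ : ∀ j, 1 < ρ j)
    (hℓq : Summable fun j => (ρ j) ^ (-(2 * p / (2 - p))))
    (hweighted : Summable fun ν : ℕ →₀ ℕ => (ν.prod fun j n => ρ j ^ n) ^ 2 * (t ν) ^ 2) :
    Summable fun ν : ℕ →₀ ℕ => (t ν) ^ p := by
  have hρ0 (j : ℕ) : 0 < ρ j := one_pos.trans (hρ j)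
  have hq : 0 < 2 * p / (2 - p) := div_pos (by linarith) (by linarith)
  refine summable_rpow_of_summable_sq_mul_sq hp0 hp2 ht
    (fun ν => Finset.prod_pos fun j _ => pow_pos (hρ0 j) _) hweighted ?_
  exact (summable_finsupp_prod_pow (fun j => Real.rpow_nonneg (hρ0 j).le _)
    (fun j => Real.rpow_lt_one_of_one_lt_of_neg (hρ j) (neg_neg_of_pos hq)) hℓq).congr
    fun ν => (Finsupp.prod_pow_rpow (fun j => (hρ0 j).le) ν _).symm
end

section
/- Let ρ = (ρ_j)_{j≥1} with ρ_j > 1 for all j and ∑_j ρ_j^{-q} < ∞ for some 0 < q < ∞, and suppose sup_j ρ_j^{-1} < 1. Then for each j, the series S_j := ∑_{k≥0} ρ_j^{-qk}(1+2k)^{q/2} converges, and there exists a constant C > 0 such that S_j ≤ 1 + C ρ_j^{-q} for all j; consequently ∏_{j≥1} S_j converges (is finite). -/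
/-!
Put `r_j = ρ_j ^ (-q) ∈ (0, 1)`, so that `S_j = ∑ₖ r_jᵏ (1 + 2k) ^ (q/2)`, a power series in
`r_j` with nonnegative coefficients. Polynomial growth of the coefficients gives convergence for
`r_j < 1`. Since `r_j ≤ c ^ q < 1` uniformly, splitting off the constant term gives
`S_j - 1 ≤ r_j ∑ₖ (c ^ q)ᵏ (3 + 2k) ^ (q/2) = C r_j`, so `∑_j (S_j - 1) < ∞` and the product
`∏_j (1 + (S_j - 1))` converges.
-/

open Filter

lemma summable_pow_mul_add_mul_rpow {r : ℝ} (hr : |r| < 1) {a b : ℝ} (ha : 1 ≤ a) (hb : 0 ≤ b)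
    (p : ℝ) : Summable fun k : ℕ => r ^ k * (a + b * k) ^ p := by
  set N := ⌈p⌉₊
  refine .of_norm_bounded_eventually_nat
    ((summable_pow_mul_geometric_of_norm_lt_one (R := ℝ) N
      (by rwa [Real.norm_eq_abs])).norm.mul_left ((a + b) ^ N)) ?_
  filter_upwards [eventually_ge_atTop 1] with k hk
  have hk : (1 : ℝ) ≤ k := by exact_mod_cast hk
  have hbase : 1 ≤ a + b * k := by nlinarith
  calc ‖r ^ k * (a + b * k) ^ p‖ = |r| ^ k * (a + b * k) ^ p := by
        rw [Real.norm_eq_abs, abs_mul, abs_pow, abs_of_nonneg (Real.rpow_nonneg (by linarith) p)]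
    _ ≤ |r| ^ k * (a + b * k) ^ N := by
        gcongr
        exact_mod_cast Real.rpow_le_rpow_of_exponent_le hbase (Nat.le_ceil p)
    _ ≤ |r| ^ k * ((a + b) * k) ^ N := by gcongr; nlinarith
    _ = (a + b) ^ N * ‖(k : ℝ) ^ N * r ^ k‖ := by
        rw [Real.norm_eq_abs, abs_mul, abs_pow, abs_pow, Nat.abs_cast, mul_pow]
        ring

lemma tsum_pow_mul_le_add_mul {f : ℕ → ℝ} (hf : ∀ k, 0 ≤ f k) {r c : ℝ} (hr : 0 ≤ r)
    (hrc : r ≤ c) (hc : Summable fun k => c ^ k * f (k + 1)) :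
    ∑' k, r ^ k * f k ≤ f 0 + r * ∑' k, c ^ k * f (k + 1) := by
  have hterm : ∀ k, r ^ (k + 1) * f (k + 1) ≤ r * (c ^ k * f (k + 1)) := fun k => by
    rw [pow_succ', mul_assoc]
    gcongr
    exact hf _
  have htail : Summable fun k => r ^ (k + 1) * f (k + 1) :=
    (hc.mul_left r).of_nonneg_of_le (fun k => mul_nonneg (by positivity) (hf (k + 1))) hterm
  rw [((summable_nat_add_iff (f := fun k => r ^ k * f k) 1).1 htail).tsum_eq_zero_add,
    pow_zero, one_mul, ← tsum_mul_left]
  exact add_le_add_right (htail.tsum_le_tsum hterm (hc.mul_left r)) _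

lemma Real.rpow_neg_le_rpow_of_inv_le {x c q : ℝ} (hx : 0 < x) (hq : 0 ≤ q) (h : x⁻¹ ≤ c) :
    x ^ (-q) ≤ c ^ q := by
  rw [Real.rpow_neg hx.le, ← Real.inv_rpow hx.le]
  exact Real.rpow_le_rpow (inv_pos.2 hx).le h hq

lemma Real.multipliable_of_one_le_of_le_one_add_mul {ι : Type*} {s r : ι → ℝ} {C : ℝ}
    (hr : Summable r) (hs₁ : ∀ i, 1 ≤ s i) (hsC : ∀ i, s i ≤ 1 + C * r i) : Multipliable s := by
  have hexcess : Summable fun i => s i - 1 :=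
    (hr.mul_left C).of_nonneg_of_le (fun i => sub_nonneg.2 (hs₁ i)) fun i => by linarith [hsC i]
  simpa using Real.multipliable_one_add_of_summable hexcess

theorem stmt_5 (ρ : ℕ → ℝ) (q : ℝ) (hq : 0 < q) (hρ : ∀ j, 1 < ρ j)
    (hsum : Summable fun j => (ρ j) ^ (-q))
    (hsup : ∃ c < 1, ∀ j, (ρ j)⁻¹ ≤ c) :
    (∀ j, Summable fun k : ℕ => (ρ j) ^ (-(q * k)) * (1 + 2 * (k : ℝ)) ^ (q / 2)) ∧
    (∃ C > 0, ∀ j,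
      (∑' k : ℕ, (ρ j) ^ (-(q * k)) * (1 + 2 * (k : ℝ)) ^ (q / 2)) ≤ 1 + C * (ρ j) ^ (-q)) ∧
    Multipliable fun j => ∑' k : ℕ, (ρ j) ^ (-(q * k)) * (1 + 2 * (k : ℝ)) ^ (q / 2) := by
  obtain ⟨c, hc1, hc⟩ := hsup
  have hρ0 j : 0 < ρ j := one_pos.trans (hρ j)
  have hc0 : 0 < c := (inv_pos.2 (hρ0 0)).trans_le (hc 0)
  have hpow j (k : ℕ) : ρ j ^ (-(q * k)) = (ρ j ^ (-q)) ^ k := by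
    rw [← Real.rpow_natCast, ← Real.rpow_mul (hρ0 j).le, neg_mul]
  simp_rw [hpow]
  have hr0 j : 0 < ρ j ^ (-q) := Real.rpow_pos_of_pos (hρ0 j) _
  have hS j : Summable fun k : ℕ => (ρ j ^ (-q)) ^ k * (1 + 2 * (k : ℝ)) ^ (q / 2) := by
    refine summable_pow_mul_add_mul_rpow ?_ le_rfl zero_le_two _
    rw [abs_of_pos (hr0 j)]
    exact Real.rpow_lt_one_of_one_lt_of_neg (hρ j) (neg_neg_of_pos hq)
  have hCsum : Summable fun k : ℕ => (c ^ q) ^ k * (1 + 2 * ((k + 1 : ℕ) : ℝ)) ^ (q / 2) := by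
    have hcq : |c ^ q| < 1 := by
      rw [abs_of_pos (by positivity)]; exact Real.rpow_lt_one hc0.le hc1 hq
    refine (summable_pow_mul_add_mul_rpow hcq (a := 3) (by norm_num) zero_le_two (q / 2)).congr
      fun k => ?_
    push_cast; ring_nf
  set C := ∑' k : ℕ, (c ^ q) ^ k * (1 + 2 * ((k + 1 : ℕ) : ℝ)) ^ (q / 2)
  have hC : 0 < C := hCsum.tsum_pos (fun k => by positivity) 0 (by positivity)
  have hbound j : ∑' k : ℕ, (ρ j ^ (-q)) ^ k * (1 + 2 * (k : ℝ)) ^ (q / 2)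
      ≤ 1 + C * ρ j ^ (-q) := by
    have := tsum_pow_mul_le_add_mul (f := fun k : ℕ => (1 + 2 * (k : ℝ)) ^ (q / 2))
      (fun k => by positivity) (hr0 j).le
      (Real.rpow_neg_le_rpow_of_inv_le (hρ0 j) hq.le (hc j)) hCsum
    simp only [Nat.cast_zero, mul_zero, add_zero, Real.one_rpow] at this
    linarith
  have hge j : 1 ≤ ∑' k : ℕ, (ρ j ^ (-q)) ^ k * (1 + 2 * (k : ℝ)) ^ (q / 2) := by
    simpa using (hS j).le_tsum 0 fun k _ => by have := hr0 j; positivity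
  exact ⟨hS, ⟨C, hC, hbound⟩, Real.multipliable_of_one_le_of_le_one_add_mul hsum hge hbound⟩
end

section
/- In the sharpness example of Section 4.1: let D_j ⊂ ]0,1[ have midpoint m_j, ψ_j = b_j · χ_{[l_j, m_j]}, h_j the hat function on D_j, and suppose t ∈ H¹₀(]0,1[) satisfies ∫₀¹ t'(x) v'(x) dx = −∫₀¹ ψ_j(x) c_j h_j'(x) v'(x) dx for all v ∈ H¹₀(]0,1[), where c_j > 0 and b_j > 0. Then ‖t‖_{H¹₀} := (∫₀¹ |t'|² dx)^{1/2} ≥ b_j c_j / √|D_j|. -/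
/-!
Test the variational equation with the hat function `h` of `[l, r]`, whose derivative is
`± 2 / L` on the two halves. Since `ψ` lives on the left half, the right-hand side equals
`-2 b c / L`, while `∫ h'² = 4 / L`; Cauchy–Schwarz then gives
`(2 b c / L)² ≤ ‖t‖² · 4 / L`.
-/

open MeasureTheory Set

theorem sq_integral_mul_le_integral_sq_mul_integral_sq {α : Type*} [MeasurableSpace α]
    {μ : Measure α} {f g : α → ℝ} (hf : Integrable (fun x => f x ^ 2) μ)
    (hg : Integrable (fun x => g x ^ 2) μ) (hfg : Integrable (fun x => f x * g x) μ) :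
    (∫ x, f x * g x ∂μ) ^ 2 ≤ (∫ x, f x ^ 2 ∂μ) * ∫ x, g x ^ 2 ∂μ := by
  have hquad : ∀ t : ℝ, 0 ≤ (∫ x, g x ^ 2 ∂μ) * (t * t) + 2 * (∫ x, f x * g x ∂μ) * t
      + ∫ x, f x ^ 2 ∂μ := fun t => by
    have hexpand : ∫ x, (f x + t * g x) ^ 2 ∂μ = (∫ x, g x ^ 2 ∂μ) * (t * t)
        + 2 * (∫ x, f x * g x ∂μ) * t + ∫ x, f x ^ 2 ∂μ := by
      simp_rw [show ∀ x, (f x + t * g x) ^ 2 = f x ^ 2 + (2 * t) * (f x * g x)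
        + (t * t) * g x ^ 2 from fun x => by ring]
      rw [integral_add (f := fun x => f x ^ 2 + 2 * t * (f x * g x)) (hf.add (hfg.const_mul _))
        (hg.const_mul _), integral_add hf (hfg.const_mul _), integral_const_mul,
        integral_const_mul]
      ring
    exact hexpand ▸ integral_nonneg fun x => sq_nonneg _
  have := discrim_le_zero hquad
  rw [discrim] at this
  linarith

theorem sq_intervalIntegral_mul_le {f g : ℝ → ℝ} {a b : ℝ} (hab : a ≤ b)
    (hf : IntervalIntegrable (fun x => f x ^ 2) volume a b)
    (hg : IntervalIntegrable (fun x => g x ^ 2) volume a b)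
    (hfg : IntervalIntegrable (fun x => f x * g x) volume a b) :
    (∫ x in a..b, f x * g x) ^ 2 ≤ (∫ x in a..b, f x ^ 2) * ∫ x in a..b, g x ^ 2 := by
  simp only [intervalIntegral.integral_of_le hab]
  exact sq_integral_mul_le_integral_sq_mul_integral_sq hf.1 hg.1 hfg.1

theorem intervalIntegral_indicator_const {a b k : ℝ} {s : Set ℝ} (hab : a ≤ b)
    (hs : MeasurableSet s) (hsub : s ⊆ Ioc a b) :
    ∫ x in a..b, s.indicator (fun _ => k) x = volume.real s * k := by
  rw [intervalIntegral.integral_of_le hab, setIntegral_indicator hs, inter_eq_right.2 hsub,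
    setIntegral_const, smul_eq_mul]

theorem intervalIntegrable_indicator_const {a b k : ℝ} {s : Set ℝ} (hs : MeasurableSet s) :
    IntervalIntegrable (s.indicator fun _ => k) volume a b :=
  ⟨intervalIntegrable_const.1.indicator hs, intervalIntegrable_const.2.indicator hs⟩

noncomputable def hat (l r : ℝ) (x : ℝ) : ℝ :=
  max 0 (min (2 * (x - l) / (r - l)) (2 * (r - x) / (r - l)))

noncomputable def hatDeriv (l r : ℝ) (x : ℝ) : ℝ :=
  if l < x ∧ x < (l + r) / 2 then 2 / (r - l)
  else if (l + r) / 2 < x ∧ x < r then -(2 / (r - l)) else 0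

section Hat

variable {l r x : ℝ}

theorem continuous_hat (l r : ℝ) : Continuous (hat l r) := by
  unfold hat; fun_prop

theorem hat_of_le_left (hlr : l < r) (hx : x ≤ l) : hat l r x = 0 := by
  have : 2 * (x - l) / (r - l) ≤ 0 := div_nonpos_of_nonpos_of_nonneg (by linarith) (by linarith)
  exact max_eq_left ((min_le_left _ _).trans this)

theorem hat_of_right_le (hlr : l < r) (hx : r ≤ x) : hat l r x = 0 := by
  have : 2 * (r - x) / (r - l) ≤ 0 := div_nonpos_of_nonpos_of_nonneg (by linarith) (by linarith)
  exact max_eq_left ((min_le_right _ _).trans this)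

theorem hat_of_mem_left_half (hlr : l < r) (hlx : l ≤ x) (hxm : x ≤ (l + r) / 2) :
    hat l r x = 2 * (x - l) / (r - l) := by
  have hle : 2 * (x - l) / (r - l) ≤ 2 * (r - x) / (r - l) :=
    div_le_div_of_nonneg_right (by linarith) (by linarith)
  rw [hat, min_eq_left hle, max_eq_right (div_nonneg (by linarith) (by linarith))]

theorem hat_of_mem_right_half (hlr : l < r) (hmx : (l + r) / 2 ≤ x) (hxr : x ≤ r) :
    hat l r x = 2 * (r - x) / (r - l) := by
  have hle : 2 * (r - x) / (r - l) ≤ 2 * (x - l) / (r - l) :=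
    div_le_div_of_nonneg_right (by linarith) (by linarith)
  rw [hat, min_eq_right hle, max_eq_right (div_nonneg (by linarith) (by linarith))]

theorem hasDerivAt_hat (hlr : l < r) (hx : x ∉ ({l, (l + r) / 2, r} : Set ℝ)) :
    HasDerivAt (hat l r) (hatDeriv l r x) x := by
  simp only [mem_insert_iff, mem_singleton_iff, not_or] at hx
  obtain ⟨hxl, hxm, hxr⟩ := hx
  rcases lt_or_gt_of_ne hxl with hxl | hlx
  · rw [hatDeriv, if_neg (by grind), if_neg (by grind)]
    refine (hasDerivAt_const x 0).congr_of_eventuallyEq ?_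
    filter_upwards [Iio_mem_nhds hxl] with y hy using hat_of_le_left hlr (le_of_lt hy)
  rcases lt_or_gt_of_ne hxm with hxm | hmx
  · rw [hatDeriv, if_pos ⟨hlx, hxm⟩]
    refine (by simpa using (((hasDerivAt_id x).sub_const l).const_mul 2).div_const (r - l) :
      HasDerivAt (fun y => 2 * (y - l) / (r - l)) _ x).congr_of_eventuallyEq ?_
    filter_upwards [Ioo_mem_nhds hlx hxm] with y hy using
      hat_of_mem_left_half hlr hy.1.le hy.2.le
  rcases lt_or_gt_of_ne hxr with hxr | hrx
  · rw [hatDeriv, if_neg (by grind), if_pos ⟨hmx, hxr⟩]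
    refine (by simpa [neg_div] using
      (((hasDerivAt_id x).const_sub r).const_mul 2).div_const (r - l) :
      HasDerivAt (fun y => 2 * (r - y) / (r - l)) _ x).congr_of_eventuallyEq ?_
    filter_upwards [Ioo_mem_nhds hmx hxr] with y hy using
      hat_of_mem_right_half hlr hy.1.le hy.2.le
  · rw [hatDeriv, if_neg (by grind), if_neg (by grind)]
    refine (hasDerivAt_const x 0).congr_of_eventuallyEq ?_
    filter_upwards [Ioi_mem_nhds hrx] with y hy using hat_of_right_le hlr (le_of_lt hy)

theorem hatDeriv_sq_eq_indicator (l r : ℝ) :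
    (fun x => hatDeriv l r x ^ 2) =
      (Ioo l ((l + r) / 2) ∪ Ioo ((l + r) / 2) r).indicator fun _ => (2 / (r - l)) ^ 2 := by
  funext x
  by_cases h₁ : l < x ∧ x < (l + r) / 2
  · rw [hatDeriv, if_pos h₁, indicator_of_mem (mem_union_left _ (show x ∈ Ioo _ _ from h₁))]
  by_cases h₂ : (l + r) / 2 < x ∧ x < r
  · rw [hatDeriv, if_neg h₁, if_pos h₂,
      indicator_of_mem (mem_union_right _ (show x ∈ Ioo _ _ from h₂)), neg_sq]
  · rw [hatDeriv, if_neg h₁, if_neg h₂, indicator_of_notMem (by simp_all), sq, zero_mul]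

theorem intervalIntegrable_hatDeriv_sq (l r a b : ℝ) :
    IntervalIntegrable (fun x => hatDeriv l r x ^ 2) volume a b :=
  hatDeriv_sq_eq_indicator l r ▸
    intervalIntegrable_indicator_const (measurableSet_Ioo.union measurableSet_Ioo)

theorem integral_hatDeriv_sq {a b : ℝ} (hal : a ≤ l) (hlr : l < r) (hrb : r ≤ b) :
    ∫ x in a..b, hatDeriv l r x ^ 2 = 4 / (r - l) := by
  have hdisj : Disjoint (Ioo l ((l + r) / 2)) (Ioo ((l + r) / 2) r) :=
    disjoint_left.2 fun _ h₁ h₂ => h₁.2.not_gt h₂.1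
  rw [hatDeriv_sq_eq_indicator, intervalIntegral_indicator_const (by linarith)
    (measurableSet_Ioo.union measurableSet_Ioo)
    (union_subset (Ioo_subset_Ioc_self.trans (Ioc_subset_Ioc hal (by linarith)))
      (Ioo_subset_Ioc_self.trans (Ioc_subset_Ioc (by linarith) hrb))),
    measureReal_union hdisj measurableSet_Ioo measure_Ioo_lt_top.ne measure_Ioo_lt_top.ne,
    Real.volume_real_Ioo_of_le (by linarith),
    Real.volume_real_Ioo_of_le (by linarith)]
  field_simp [sub_ne_zero.2 hlr.ne']
  ring

theorem integral_leftHalf_mul_hatDeriv_sq {a b : ℝ} (β γ : ℝ) (hal : a ≤ l) (hlr : l < r)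
    (hrb : r ≤ b) :
    ∫ x in a..b, (if l ≤ x ∧ x ≤ (l + r) / 2 then β else 0) * (γ * hatDeriv l r x) *
      hatDeriv l r x = 2 * β * γ / (r - l) := by
  have hind : (fun x => (if l ≤ x ∧ x ≤ (l + r) / 2 then β else 0) * (γ * hatDeriv l r x) *
      hatDeriv l r x) = (Ioo l ((l + r) / 2)).indicator fun _ => β * γ * (2 / (r - l)) ^ 2 := by
    funext x
    by_cases h₁ : l < x ∧ x < (l + r) / 2
    · rw [hatDeriv, if_pos ⟨h₁.1.le, h₁.2.le⟩, if_pos h₁,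
        indicator_of_mem (show x ∈ Ioo _ _ from h₁)]
      ring
    · rw [indicator_of_notMem (show x ∉ Ioo _ _ from h₁)]
      by_cases h₂ : l ≤ x ∧ x ≤ (l + r) / 2
      · rw [hatDeriv, if_neg h₁,
          if_neg (show ¬((l + r) / 2 < x ∧ x < r) from fun h => h.1.not_ge h₂.2)]
        ring
      · rw [if_neg h₂]
        ring
  rw [hind, intervalIntegral_indicator_const (by linarith) measurableSet_Ioo
    (Ioo_subset_Ioc_self.trans (Ioc_subset_Ioc hal (by linarith))),
    Real.volume_real_Ioo_of_le (by linarith)]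
  field_simp [sub_ne_zero.2 hlr.ne']
  ring

end Hat

theorem stmt_14 (l r b c : ℝ) (hl : 0 < l) (hlr : l < r) (hr : r < 1)
    (hb : 0 < b) (hc : 0 < c)
    (m L : ℝ) (hm : m = (l + r) / 2) (hL : L = r - l)
    (ψ g dt : ℝ → ℝ)
    (hψ : ∀ x, ψ x = if l ≤ x ∧ x ≤ m then b else 0)
    (hg : ∀ x, g x = if l < x ∧ x < m then 2 / L
      else if m < x ∧ x < r then -(2 / L) else 0)
    (hdt : IntervalIntegrable (fun x => (dt x) ^ 2) volume 0 1)
    (hvar : ∀ v dv : ℝ → ℝ, ContinuousOn v (Set.Icc 0 1) → v 0 = 0 → v 1 = 0 →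
      (∀ x ∈ Set.Ioo (0:ℝ) 1 \ {l, m, r}, HasDerivAt v (dv x) x) →
      IntervalIntegrable (fun x => (dv x) ^ 2) volume 0 1 →
      ∫ x in (0:ℝ)..1, dt x * dv x = -∫ x in (0:ℝ)..1, ψ x * (c * g x) * dv x) :
    b * c / Real.sqrt L ≤ Real.sqrt (∫ x in (0:ℝ)..1, (dt x) ^ 2) := by
  subst hm hL
  obtain rfl : g = hatDeriv l r := funext hg
  obtain rfl : ψ = fun x => if l ≤ x ∧ x ≤ (l + r) / 2 then b else 0 := funext hψ
  have hL : 0 < r - l := sub_pos.2 hlr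
  have htest : ∫ x in (0:ℝ)..1, dt x * hatDeriv l r x = -(2 * b * c / (r - l)) := by
    rw [hvar (hat l r) (hatDeriv l r) (continuous_hat l r).continuousOn
      (hat_of_le_left hlr hl.le) (hat_of_right_le hlr hr.le)
      (fun x hx => hasDerivAt_hat hlr hx.2) (intervalIntegrable_hatDeriv_sq l r 0 1),
      integral_leftHalf_mul_hatDeriv_sq b c hl.le hlr hr.le]
  -- Non-integrable functions integrate to `0`, and this integral is not `0`.
  have hint : IntervalIntegrable (fun x => dt x * hatDeriv l r x) volume 0 1 := by
    by_contra h
    rw [intervalIntegral.integral_undef h] at htest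
    linarith [show 0 < 2 * b * c / (r - l) by positivity]
  have hcs := sq_intervalIntegral_mul_le zero_le_one hdt (intervalIntegrable_hatDeriv_sq l r 0 1)
    hint
  rw [htest, integral_hatDeriv_sq hl.le hlr hr.le] at hcs
  have hsq : (-(2 * b * c / (r - l))) ^ 2 = 4 / (r - l) * ((b * c) ^ 2 / (r - l)) := by
    field_simp
    ring
  rw [hsq, mul_comm (∫ x in (0:ℝ)..1, dt x ^ 2)] at hcs
  rw [Real.le_sqrt (by positivity) (intervalIntegral.integral_nonneg zero_le_one fun _ _ =>
    sq_nonneg _), div_pow, Real.sq_sqrt hL.le]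
  exact le_of_mul_le_mul_left hcs (by positivity)
end
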